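/- In a deterministic tree-shaped sum-only probabilistic circuit (GeDT), if the root density satisfies p(x) > 0 for a given complete input x, then there exists a unique leaf v_x whose support contains x, a unique root-to-leaf path Λ of nonzero nodes, and p(x, y) = (∏_{(v,u) ∈ Λ} w_{v,u}) · p_{v_x}(x, y) for all y, where w_{v,u} are the sum weights along Λ. -/
import Mathlib


/-- A Generative Decision Tree: a tree-shaped probabilistic circuit consisting only of sum
nodes (with weighted children) and leaves computing densities over `X × Y` with support in a
cell of the feature space. -/
inductive GeDT (X Y : Type) : Type
  | leaf (cell : Set X) (p : X → Y → ℝ) : GeDT X Y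
  | sum (children : List (ℝ × GeDT X Y)) : GeDT X Y

namespace GeDT

variable {X Y : Type}

/- The function computed by a GeDT node. -/
mutual
  def eval : GeDT X Y → X → Y → ℝ
    | .leaf _ p, x, y => p x y
    | .sum cs, x, y => evalList cs x y
  def evalList : List (ℝ × GeDT X Y) → X → Y → ℝ
    | [], _, _ => 0
    | c :: cs, x, y => c.1 * eval c.2 x y + evalList cs x y
end

/- The support of a GeDT. -/
mutual
  def supp : GeDT X Y → Set X
    | .leaf c _ => c
    | .sum cs => suppList cs
  def suppList : List (ℝ × GeDT X Y) → Set X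
    | [] => ∅
    | c :: cs => supp c.2 ∪ suppList cs
end

/- Well-formedness: nonnegative leaves supported in their cells, convex sum weights,
pairwise disjoint children supports (determinism of the underlying tree partition). -/
mutual
  def wf : GeDT X Y → Prop
    | .leaf c p => (∀ x y, 0 ≤ p x y) ∧ (∀ x y, x ∉ c → p x y = 0)
    | .sum cs => wfList cs ∧ (cs.map Prod.fst).sum = 1 ∧
        cs.Pairwise (fun a b => Disjoint (supp a.2) (supp b.2))
  def wfList : List (ℝ × GeDT X Y) → Prop
    | [] => True
    | c :: cs => (0 ≤ c.1 ∧ wf c.2) ∧ wfList cs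
end

/- The list of leaves of a GeDT, each together with the list of sum weights along the
root-to-leaf path: entries `(Λ, cell, p)`. -/
mutual
  def leafPaths : GeDT X Y → List (List ℝ × Set X × (X → Y → ℝ))
    | .leaf c p => [([], c, p)]
    | .sum cs => leafPathsList cs
  def leafPathsList : List (ℝ × GeDT X Y) → List (List ℝ × Set X × (X → Y → ℝ))
    | [] => []
    | c :: cs => (leafPaths c.2).map (fun q => (c.1 :: q.1, q.2)) ++ leafPathsList cs
end

lemma mem_suppList {cs : List (ℝ × GeDT X Y)} {x : X} :
    x ∈ suppList cs ↔ ∃ c ∈ cs, x ∈ supp c.2 := by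
  induction cs with
  | nil => simp [suppList]
  | cons c cs ih => simp [suppList, ih]

mutual
  lemma cell_subset_supp {t : GeDT X Y} {q} (hq : q ∈ t.leafPaths) :
      q.2.1 ⊆ supp t := by
    cases t with
    | leaf c p =>
      simp [leafPaths] at hq
      subst hq
      exact le_refl _
    | sum cs =>
      exact cellList_subset_supp hq
  lemma cellList_subset_supp {cs : List (ℝ × GeDT X Y)} {q}
      (hq : q ∈ leafPathsList cs) : q.2.1 ⊆ suppList cs := by
    cases cs with
    | nil => simp [leafPathsList] at hq
    | cons c cs =>
      simp only [leafPathsList, List.mem_append, List.mem_map] at hq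
      rcases hq with ⟨r, hr, hrq⟩ | hq
      · subst hrq
        exact (cell_subset_supp hr).trans (Set.subset_union_left)
      · exact (cellList_subset_supp hq).trans (Set.subset_union_right)
end

mutual
  lemma eval_zero_of_not_mem {t : GeDT X Y} (ht : t.wf) {x : X}
      (hx : x ∉ supp t) : ∀ y, t.eval x y = 0 := by
    cases t with
    | leaf c p => exact fun y => ht.2 x y hx
    | sum cs => exact evalList_zero_of_not_mem ht.1 hx
  lemma evalList_zero_of_not_mem {cs : List (ℝ × GeDT X Y)} (hcs : wfList cs) {x : X}
      (hx : x ∉ suppList cs) : ∀ y, evalList cs x y = 0 := by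
    cases cs with
    | nil => intro y; simp [evalList]
    | cons c cs =>
      intro y
      simp only [suppList, Set.mem_union, not_or] at hx
      simp [evalList, eval_zero_of_not_mem hcs.1.2 hx.1 y,
        evalList_zero_of_not_mem hcs.2 hx.2 y]
end

mutual
  lemma eval_zero_of_no_cell {t : GeDT X Y} (ht : t.wf) {x : X}
      (hx : ∀ q ∈ t.leafPaths, x ∉ q.2.1) : ∀ y, t.eval x y = 0 := by
    cases t with
    | leaf c p =>
      intro y
      refine ht.2 x y ?_
      exact hx ([], c, p) (by simp [leafPaths])
    | sum cs => exact evalList_zero_of_no_cell ht.1 hx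
  lemma evalList_zero_of_no_cell {cs : List (ℝ × GeDT X Y)} (hcs : wfList cs) {x : X}
      (hx : ∀ q ∈ leafPathsList cs, x ∉ q.2.1) : ∀ y, evalList cs x y = 0 := by
    cases cs with
    | nil => intro y; simp [evalList]
    | cons c cs =>
      intro y
      have h1 : ∀ q ∈ leafPaths c.2, x ∉ q.2.1 := by
        intro q hq
        exact hx (c.1 :: q.1, q.2) (by
          simp only [leafPathsList, List.mem_append, List.mem_map]
          exact Or.inl ⟨q, hq, rfl⟩)
      have h2 : ∀ q ∈ leafPathsList cs, x ∉ q.2.1 := by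
        intro q hq
        exact hx q (by simp only [leafPathsList, List.mem_append]; exact Or.inr hq)
      simp [evalList, eval_zero_of_no_cell hcs.1.2 h1 y,
        evalList_zero_of_no_cell hcs.2 h2 y]
end

mutual
  lemma eval_eq_of_mem_cell {t : GeDT X Y} (ht : t.wf) {x : X} {q}
      (hq : q ∈ t.leafPaths) (hx : x ∈ q.2.1) :
      ∀ y, t.eval x y = q.1.prod * q.2.2 x y := by
    cases t with
    | leaf c p =>
      simp [leafPaths] at hq
      subst hq
      intro y; simp [eval]
    | sum cs =>
      intro y
      have := evalList_eq_of_mem_cell ht.1 ht.2.2 hq hx y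
      simpa [eval] using this
  lemma evalList_eq_of_mem_cell {cs : List (ℝ × GeDT X Y)} (hcs : wfList cs)
      (hd : cs.Pairwise (fun a b => Disjoint (supp a.2) (supp b.2))) {x : X} {q}
      (hq : q ∈ leafPathsList cs) (hx : x ∈ q.2.1) :
      ∀ y, evalList cs x y = q.1.prod * q.2.2 x y := by
    cases cs with
    | nil => simp [leafPathsList] at hq
    | cons c cs =>
      intro y
      simp only [leafPathsList, List.mem_append, List.mem_map] at hq
      rcases hq with ⟨r, hr, hrq⟩ | hq
      · subst hrq
        have hxr : x ∈ r.2.1 := hx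
        have hxsupp : x ∈ supp c.2 := cell_subset_supp hr hxr
        have hnot : x ∉ suppList cs := by
          intro hmem
          rcases mem_suppList.1 hmem with ⟨b, hb, hxb⟩
          exact ((List.pairwise_cons.1 hd).1 b hb).ne_of_mem hxsupp hxb rfl
        have h1 := eval_eq_of_mem_cell hcs.1.2 hr hxr y
        have h2 := evalList_zero_of_not_mem hcs.2 hnot y
        simp [evalList, h1, h2]
        ring
      · have hxsupp : x ∈ suppList cs := cellList_subset_supp hq hx
        have hnot : x ∉ supp c.2 := by
          intro hmem
          rcases mem_suppList.1 hxsupp with ⟨b, hb, hxb⟩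
          exact ((List.pairwise_cons.1 hd).1 b hb).ne_of_mem hmem hxb rfl
        have h1 := eval_zero_of_not_mem hcs.1.2 hnot y
        have h2 := evalList_eq_of_mem_cell hcs.2 hd.of_cons hq hx y
        simp [evalList, h1, h2]
end

mutual
  lemma leafPaths_unique {t : GeDT X Y} (ht : t.wf) {x : X} {q₁ q₂}
      (h₁ : q₁ ∈ t.leafPaths) (hx₁ : x ∈ q₁.2.1)
      (h₂ : q₂ ∈ t.leafPaths) (hx₂ : x ∈ q₂.2.1) : q₁ = q₂ := by
    cases t with
    | leaf c p =>
      simp [leafPaths] at h₁ h₂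
      rw [h₁, h₂]
    | sum cs => exact leafPathsList_unique ht.1 ht.2.2 h₁ hx₁ h₂ hx₂
  lemma leafPathsList_unique {cs : List (ℝ × GeDT X Y)} (hcs : wfList cs)
      (hd : cs.Pairwise (fun a b => Disjoint (supp a.2) (supp b.2))) {x : X} {q₁ q₂}
      (h₁ : q₁ ∈ leafPathsList cs) (hx₁ : x ∈ q₁.2.1)
      (h₂ : q₂ ∈ leafPathsList cs) (hx₂ : x ∈ q₂.2.1) : q₁ = q₂ := by
    cases cs with
    | nil => simp [leafPathsList] at h₁
    | cons c cs =>
      simp only [leafPathsList, List.mem_append, List.mem_map] at h₁ h₂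
      have hdisj : ∀ b ∈ cs, Disjoint (supp c.2) (supp b.2) :=
        (List.pairwise_cons.1 hd).1
      rcases h₁ with ⟨r₁, hr₁, hrq₁⟩ | h₁ <;> rcases h₂ with ⟨r₂, hr₂, hrq₂⟩ | h₂
      · subst hrq₁; subst hrq₂
        have := leafPaths_unique hcs.1.2 hr₁ hx₁ hr₂ hx₂
        rw [this]
      · subst hrq₁
        exfalso
        have hxs : x ∈ supp c.2 := cell_subset_supp hr₁ hx₁
        rcases mem_suppList.1 (cellList_subset_supp h₂ hx₂) with ⟨b, hb, hxb⟩
        exact (hdisj b hb).ne_of_mem hxs hxb rfl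
      · subst hrq₂
        exfalso
        have hxs : x ∈ supp c.2 := cell_subset_supp hr₂ hx₂
        rcases mem_suppList.1 (cellList_subset_supp h₁ hx₁) with ⟨b, hb, hxb⟩
        exact (hdisj b hb).ne_of_mem hxs hxb rfl
      · exact leafPathsList_unique hcs.2 hd.of_cons h₁ hx₁ h₂ hx₂
end

/-- in a well-formed (hence deterministic) GeDT, if the root density satisfies
`p(x) > 0` for a complete input `x`, then there is a unique leaf (with its root-to-leaf path
of weights `Λ`) whose support contains `x`, and for every such leaf,
`p(x, y) = (∏_{(v,u) ∈ Λ} w_{v,u}) · p_{v_x}(x, y)` for all `y`. -/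
theorem eval_eq_path_weights_mul_leaf [Fintype Y]
    (t : GeDT X Y) (ht : t.wf) (x : X)
    (hx : 0 < ∑ y, t.eval x y) :
    (∃! q : List ℝ × Set X × (X → Y → ℝ), q ∈ t.leafPaths ∧ x ∈ q.2.1) ∧
    (∀ q ∈ t.leafPaths, x ∈ q.2.1 → ∀ y, t.eval x y = q.1.prod * q.2.2 x y) := by
  have hex : ∃ q ∈ t.leafPaths, x ∈ q.2.1 := by
    by_contra h
    push_neg at h
    have : ∀ y, t.eval x y = 0 := eval_zero_of_no_cell ht h
    simp [this] at hx
  obtain ⟨q, hq, hxq⟩ := hex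
  exact ⟨⟨q, ⟨hq, hxq⟩, fun r ⟨hr, hxr⟩ => leafPaths_unique ht hr hxr hq hxq⟩,
    fun r hr hxr y => eval_eq_of_mem_cell ht hr hxr y⟩

end GeDT
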